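/- In the free bialgebra B = k⟨g,x⟩, the (n+1)-st Sweedler power of g^i x^j equals Σ over tuples (k_1,...,k_n) with 0 ≤ k_1+···+k_n ≤ j of the product g^i C_{k_1+···+k_n, j-(k_1+···+k_n)} · g^i C_{k_1+···+k_{n-1}, k_n} ··· g^i C_{k_1,k_2} · g^i C_{0,k_1}. -/

import Mathlib

open FreeAlgebra

variable (kk : Type) [Field kk]

/-- The free algebra `B = k⟨g,x⟩` on two generators. -/
abbrev FreeBi (kk : Type) [Field kk] := FreeAlgebra kk (Fin 2)

/-- The generator `g`. -/
noncomputable def gB : FreeBi kk := FreeAlgebra.ι kk 0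

/-- The generator `x`. -/
noncomputable def xB : FreeBi kk := FreeAlgebra.ι kk 1

/-- The monomial (word) associated to a function `f : Fin n → Fin 2`. -/
noncomputable def wordB {n : ℕ} (f : Fin n → Fin 2) : FreeBi kk :=
  (List.ofFn fun i => FreeAlgebra.ι kk (f i)).prod

/-- `CB a b` is the sum of all monomials with `a` occurrences of `g` and `b`
occurrences of `x`. -/
noncomputable def CB (a b : ℕ) : FreeBi kk :=
  ∑ f ∈ Finset.univ.filter
      (fun f : Fin (a + b) → Fin 2 => (Finset.univ.filter (fun i => f i = 0)).card = a),
    wordB kk f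

open TensorProduct in
/-- The comultiplication of the free bialgebra, determined by
`Δ(g) = g ⊗ g` and `Δ(x) = x ⊗ 1 + g ⊗ x`. -/
noncomputable def DeltaB : FreeBi kk →ₐ[kk] FreeBi kk ⊗[kk] FreeBi kk :=
  FreeAlgebra.lift kk
    (fun i => if i = 0 then gB kk ⊗ₜ[kk] gB kk else xB kk ⊗ₜ[kk] 1 + gB kk ⊗ₜ[kk] xB kk)

/-- The counit of the free bialgebra: `ε(g) = 1`, `ε(x) = 0`. -/
noncomputable def epsB : FreeBi kk →ₐ[kk] kk :=
  FreeAlgebra.lift kk (fun i => if i = 0 then (1 : kk) else 0)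

open TensorProduct in
/-- The `n`-th Sweedler power map `h ↦ h^{[n]} = m^{(n)} ∘ Δ^{(n)}(h)`, with
`h^{[0]} = ε(h)·1` and `h^{[1]} = h`. -/
noncomputable def PswB : ℕ → FreeBi kk →ₗ[kk] FreeBi kk
  | 0 => (Algebra.linearMap kk (FreeBi kk)) ∘ₗ (epsB kk).toLinearMap
  | 1 => LinearMap.id
  | (n + 2) =>
      (LinearMap.mul' kk (FreeBi kk)) ∘ₗ
        (TensorProduct.map (PswB (n + 1)) LinearMap.id) ∘ₗ (DeltaB kk).toLinearMap

/-- `partialSum K m = k_1 + ⋯ + k_m` for a tuple `K = (k_1, …, k_n)`. -/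
def partialSum {n : ℕ} (K : Fin n → ℕ) (m : ℕ) : ℕ :=
  ∑ t : Fin n, if (t : ℕ) < m then K t else 0

/-!
Write `S m a` for the sum of the words of length `m` with `a` letters `g`, so that
`C_{a,b} = S (a + b) a`. The first-letter recursion `S (m+1) (a+1) = g S m a + x S m (a+1)`
shows by induction on `m` that the coproduct acts on these sums like matrix
multiplication: `Δ (S m a) = ∑_k S m k ⊗ S k a`. Hence
`Δ (g^i C_{a,b}) = ∑_c g^i C_{a+c,b-c} ⊗ g^i C_{a,c}`, and since
`h^{[n+2]} = ∑ h_(1)^{[n+1]} h_(2)`, induction on `n` for all `g^i C_{a,b}` gives the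
formula at `x^j = C_{0,j}`.
-/

open Finset TensorProduct

noncomputable def wordSum (m a : ℕ) : FreeBi kk :=
  ∑ f ∈ univ.filter (fun f : Fin m → Fin 2 => #{i | f i = 0} = a), wordB kk f

theorem CB_eq_wordSum (a b : ℕ) : CB kk a b = wordSum kk (a + b) a := rfl

theorem wordB_cons {m : ℕ} (v : Fin 2) (f : Fin m → Fin 2) :
    wordB kk (Fin.cons v f) = FreeAlgebra.ι kk v * wordB kk f := by
  simp [wordB, List.ofFn_succ]

theorem card_filter_cons_eq_zero {m : ℕ} (v : Fin 2) (f : Fin m → Fin 2) :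
    #{i | (Fin.cons v f : Fin (m + 1) → Fin 2) i = 0} =
      (if v = 0 then 1 else 0) + #{i | f i = 0} := by
  rw [card_filter, card_filter, Fin.sum_univ_succ]
  simp

theorem wordSum_succ (m a : ℕ) :
    wordSum kk (m + 1) a =
      gB kk * ∑ f ∈ univ.filter (fun f : Fin m → Fin 2 => #{i | f i = 0} + 1 = a), wordB kk f
        + xB kk * wordSum kk m a := by
  simp only [wordSum, sum_filter, mul_sum, mul_ite, mul_zero]
  rw [← (Fin.consEquiv fun _ => Fin 2).sum_comp, Fintype.sum_prod_type, Fin.sum_univ_two]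
  simp only [Fin.consEquiv_apply, card_filter_cons_eq_zero]
  simp only [Fin.consEquiv, Equiv.coe_fn_mk, wordB_cons, gB, xB]
  simp [add_comm]

theorem wordSum_succ_succ (m a : ℕ) :
    wordSum kk (m + 1) (a + 1) = gB kk * wordSum kk m a + xB kk * wordSum kk m (a + 1) := by
  simp only [wordSum_succ, Nat.add_right_cancel_iff]
  rfl

theorem wordSum_succ_zero (m : ℕ) : wordSum kk (m + 1) 0 = xB kk * wordSum kk m 0 := by
  simp [wordSum_succ]

theorem wordSum_zero_zero : wordSum kk 0 0 = 1 := by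
  simp [wordSum, wordB, univ_unique]

theorem wordSum_eq_zero_of_lt {m a : ℕ} (h : m < a) : wordSum kk m a = 0 := by
  refine sum_eq_zero fun f hf => absurd (mem_filter.1 hf).2 ?_
  have := card_filter_le univ fun i => f i = 0
  simp only [card_univ, Fintype.card_fin] at this
  omega

theorem wordSum_zero_right (m : ℕ) : wordSum kk m 0 = xB kk ^ m := by
  induction m with
  | zero => exact wordSum_zero_zero kk
  | succ m ih => rw [wordSum_succ_zero, ih, pow_succ']

theorem CB_zero_left (b : ℕ) : CB kk 0 b = xB kk ^ b := by
  rw [CB_eq_wordSum, zero_add, wordSum_zero_right]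

theorem DeltaB_gB : DeltaB kk (gB kk) = gB kk ⊗ₜ gB kk := by
  simp [DeltaB, gB]

theorem DeltaB_xB : DeltaB kk (xB kk) = xB kk ⊗ₜ 1 + gB kk ⊗ₜ xB kk := by
  simp [DeltaB, xB]

theorem sum_range_wordSum_succ_tmul (m : ℕ) (T : ℕ → FreeBi kk) :
    ∑ k ∈ range (m + 2), wordSum kk (m + 1) k ⊗ₜ[kk] T k =
      ∑ k ∈ range (m + 1),
        ((gB kk * wordSum kk m k) ⊗ₜ T (k + 1) + (xB kk * wordSum kk m k) ⊗ₜ T k) := by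
  have hx : ∑ k ∈ range (m + 1), (xB kk * wordSum kk m k) ⊗ₜ[kk] T k =
      ∑ k ∈ range (m + 1), (xB kk * wordSum kk m (k + 1)) ⊗ₜ T (k + 1)
        + (xB kk * wordSum kk m 0) ⊗ₜ T 0 := by
    rw [← sum_range_succ' (fun k => (xB kk * wordSum kk m k) ⊗ₜ[kk] T k),
      sum_range_succ _ (m + 1), wordSum_eq_zero_of_lt kk (Nat.lt_succ_self m), mul_zero,
      zero_tmul, add_zero]
  rw [sum_range_succ', sum_add_distrib, hx, wordSum_succ_zero]
  simp only [wordSum_succ_succ, add_tmul, sum_add_distrib, add_assoc]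

theorem DeltaB_wordSum (m a : ℕ) :
    DeltaB kk (wordSum kk m a) = ∑ k ∈ range (m + 1), wordSum kk m k ⊗ₜ wordSum kk k a := by
  induction m generalizing a with
  | zero =>
    rcases a with _ | a
    · simp [wordSum_zero_zero, Algebra.TensorProduct.one_def]
    · simp [wordSum_eq_zero_of_lt kk (Nat.succ_pos a)]
  | succ m ih =>
    rw [sum_range_wordSum_succ_tmul]
    rcases a with _ | a
    · rw [wordSum_succ_zero, map_mul, DeltaB_xB, ih, mul_sum]
      refine sum_congr rfl fun k _ => ?_
      rw [add_mul, Algebra.TensorProduct.tmul_mul_tmul, Algebra.TensorProduct.tmul_mul_tmul,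
        one_mul, wordSum_succ_zero, add_comm]
    · rw [wordSum_succ_succ, map_add, map_mul, map_mul, DeltaB_gB, DeltaB_xB, ih, ih,
        mul_sum, mul_sum, ← sum_add_distrib]
      refine sum_congr rfl fun k _ => ?_
      simp only [add_mul, Algebra.TensorProduct.tmul_mul_tmul, one_mul, wordSum_succ_succ,
        tmul_add]
      abel

theorem DeltaB_CB (a b : ℕ) :
    DeltaB kk (CB kk a b) = ∑ c ∈ range (b + 1), CB kk (a + c) (b - c) ⊗ₜ CB kk a c := by
  rw [CB_eq_wordSum, DeltaB_wordSum, add_assoc, sum_range_add, sum_eq_zero, zero_add]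
  · refine sum_congr rfl fun c hc => ?_
    rw [CB_eq_wordSum, CB_eq_wordSum, add_assoc, Nat.add_sub_cancel' (mem_range_succ_iff.1 hc)]
  · intro k hk
    rw [wordSum_eq_zero_of_lt kk (mem_range.1 hk), tmul_zero]

theorem DeltaB_gB_pow_mul_CB (i a b : ℕ) :
    DeltaB kk (gB kk ^ i * CB kk a b) =
      ∑ c ∈ range (b + 1),
        (gB kk ^ i * CB kk (a + c) (b - c)) ⊗ₜ (gB kk ^ i * CB kk a c) := by
  rw [map_mul, map_pow, DeltaB_gB, DeltaB_CB, mul_sum, Algebra.TensorProduct.tmul_pow]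
  simp only [Algebra.TensorProduct.tmul_mul_tmul]

theorem PswB_succ_succ_of_DeltaB_eq {ι : Type*} {s : Finset ι} {h : FreeBi kk}
    {u v : ι → FreeBi kk} (n : ℕ) (hΔ : DeltaB kk h = ∑ c ∈ s, u c ⊗ₜ v c) :
    PswB kk (n + 2) h = ∑ c ∈ s, PswB kk (n + 1) (u c) * v c := by
  simp [PswB, hΔ]

theorem partialSum_zero {n : ℕ} (K : Fin n → ℕ) : partialSum K 0 = 0 := by
  simp [partialSum]

theorem partialSum_cons {n : ℕ} (c : ℕ) (K : Fin n → ℕ) (m : ℕ) :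
    partialSum (Fin.cons c K : Fin (n + 1) → ℕ) (m + 1) = c + partialSum K m := by
  simp [partialSum, Fin.sum_univ_succ]

def boundedTuples (n b : ℕ) : Finset (Fin n → ℕ) :=
  (Fintype.piFinset fun _ : Fin n => range (b + 1)).filter fun K => ∑ m, K m ≤ b

theorem mem_boundedTuples {n b : ℕ} {K : Fin n → ℕ} :
    K ∈ boundedTuples n b ↔ ∑ m, K m ≤ b := by
  refine ⟨fun hK => (mem_filter.1 hK).2, fun hK => mem_filter.2 ⟨?_, hK⟩⟩
  exact Fintype.mem_piFinset.2 fun m =>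
    mem_range_succ_iff.2 ((single_le_sum (fun _ _ => Nat.zero_le _) (mem_univ m)).trans hK)

theorem boundedTuples_zero (b : ℕ) : boundedTuples 0 b = {Fin.elim0} :=
  eq_singleton_iff_unique_mem.2
    ⟨mem_boundedTuples.2 (by simp), fun _ _ => funext fun m => m.elim0⟩

theorem sum_boundedTuples_succ {M : Type*} [AddCommMonoid M] (n b : ℕ)
    (F : (Fin (n + 1) → ℕ) → M) :
    ∑ K ∈ boundedTuples (n + 1) b, F K =
      ∑ c ∈ range (b + 1), ∑ K ∈ boundedTuples n (b - c), F (Fin.cons c K) := by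
  rw [sum_sigma']
  refine (sum_nbij'
    (fun p : (_ : ℕ) × (Fin n → ℕ) => (Fin.cons p.1 p.2 : Fin (n + 1) → ℕ))
    (fun K => ⟨K 0, Fin.tail K⟩)
    ?_ ?_ (fun _ _ => by simp) (fun K _ => Fin.cons_self_tail K) (fun _ _ => rfl)).symm
  · rintro ⟨c, K⟩ hp
    simp only [mem_sigma, mem_range, mem_boundedTuples] at hp ⊢
    rw [Fin.sum_univ_succ]
    simp only [Fin.cons_zero, Fin.cons_succ]
    omega
  · intro K hK
    simp only [mem_boundedTuples, Fin.sum_univ_succ] at hK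
    simp only [mem_sigma, mem_range, mem_boundedTuples, Fin.tail]
    omega

theorem List.prod_map_reverse_finRange_succ {M : Type*} [Monoid M] (n : ℕ)
    (F : Fin (n + 1) → M) :
    ((List.finRange (n + 1)).reverse.map F).prod =
      ((List.finRange n).reverse.map fun m => F m.succ).prod * F 0 := by
  simp [List.finRange_succ, List.map_reverse, Function.comp_def]

theorem PswB_gB_pow_mul_CB (n i a b : ℕ) :
    PswB kk (n + 1) (gB kk ^ i * CB kk a b) =
      ∑ K ∈ boundedTuples n b,
        (gB kk ^ i * CB kk (a + partialSum K n) (b - partialSum K n)) *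
          ((List.finRange n).reverse.map
            fun m : Fin n => gB kk ^ i * CB kk (a + partialSum K m) (K m)).prod := by
  induction n generalizing a b with
  | zero => simp [boundedTuples_zero, partialSum_zero, PswB]
  | succ n ih =>
    rw [PswB_succ_succ_of_DeltaB_eq kk n (DeltaB_gB_pow_mul_CB kk i a b), sum_boundedTuples_succ]
    refine sum_congr rfl fun c _ => ?_
    rw [ih, sum_mul]
    refine sum_congr rfl fun K _ => ?_
    simp only [List.prod_map_reverse_finRange_succ, Fin.val_succ, Fin.val_zero,
      partialSum_cons, partialSum_zero, Fin.cons_succ, Fin.cons_zero, add_zero, add_assoc,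
      Nat.sub_sub, mul_assoc]

/-- `(g^i x^j)^{[n+1]} = Σ_{0 ≤ k_1+⋯+k_n ≤ j}
`g^i C_{k_1+⋯+k_n, j-(k_1+⋯+k_n)} · g^i C_{k_1+⋯+k_{n-1}, k_n} ⋯ g^i C_{k_1,k_2} · g^i C_{0,k_1}`. -/
theorem PswB_g_pow_mul_x_pow (n i j : ℕ) :
    PswB kk (n + 1) (gB kk ^ i * xB kk ^ j) =
      ∑ K ∈ (Fintype.piFinset fun _ : Fin n => Finset.range (j + 1)).filter
          (fun K => ∑ m, K m ≤ j),
        (gB kk ^ i * CB kk (partialSum K n) (j - partialSum K n)) *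
          ((List.finRange n).reverse.map
            (fun (m : Fin n) => gB kk ^ i * CB kk (partialSum K (m : ℕ)) (K m))).prod := by
  simpa only [zero_add, CB_zero_left, boundedTuples] using PswB_gB_pow_mul_CB kk n i 0 j
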